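/- arXiv:1510.02990 — 3 statements merged into one kernel-verified Lean document; each statement's English description precedes it below -/
import Mathlib

section
/- Let X = {x ∈ ℝⁿ : −1 ≤ Gx ≤ 1} (componentwise) with G ∈ ℝ^{N×n}, and let h ∈ ℝⁿ, c ∈ ℝ. If there exists a diagonal matrix D ⪰ 0 of size N×N such that Gᵀ D G ⪰ h hᵀ / (4(c − 1ᵀ D 1)) in the sense that the block matrix [[Gᵀ D G, h/2], [hᵀ/2, c − 1ᵀ D 1]] is positive semidefinite, then hᵀ x ≤ c for all x ∈ X. -/
open Matrix

theorem stmt4 {n N : ℕ} (G : Matrix (Fin N) (Fin n) ℝ) (h : Fin n → ℝ) (c : ℝ)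
    (D : Matrix (Fin N) (Fin N) ℝ) (hdiag : D.IsDiag) (hDnn : ∀ i, 0 ≤ D i i)
    (hpsd : (fromBlocks (Gᵀ * D * G)
        (Matrix.of fun i (_ : Fin 1) => h i / 2)
        (Matrix.of fun (_ : Fin 1) j => h j / 2)
        (Matrix.of fun _ _ => c - ∑ i, D i i)).PosSemidef) :
    ∀ x : Fin n → ℝ, (∀ k, -1 ≤ G.mulVec x k ∧ G.mulVec x k ≤ 1) → h ⬝ᵥ x ≤ c := by
  intro x hx
  set y := G.mulVec x with hy
  have hv := hpsd.dotProduct_mulVec_nonneg (Sum.elim (-x) 1)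
  rw [fromBlocks_mulVec] at hv
  simp only [star_trivial, sumElim_dotProduct_sumElim, Sum.elim_comp_inl, Sum.elim_comp_inr,
    mulVec_neg, dotProduct_add, dotProduct_neg, neg_dotProduct, neg_neg] at hv
  have hquad : x ⬝ᵥ ((Gᵀ * D * G) *ᵥ x) = ∑ i, D i i * y i ^ 2 := by
    rw [Matrix.mul_assoc, ← mulVec_mulVec, ← mulVec_mulVec, dotProduct_mulVec,
      vecMul_transpose, ← hy]
    have hD : D *ᵥ y = fun i => D i i * y i := by
      funext i
      rw [mulVec, dotProduct]
      rw [Finset.sum_eq_single i (fun j _ hj => by rw [hdiag (Ne.symm hj), zero_mul])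
        (by simp)]
    rw [hD, dotProduct]
    exact Finset.sum_congr rfl fun i _ => by ring
  have h1 : x ⬝ᵥ ((Matrix.of fun i (_ : Fin 1) => h i / 2) *ᵥ 1) = h ⬝ᵥ x / 2 := by
    simp [mulVec, dotProduct, Finset.sum_div]
    exact Finset.sum_congr rfl fun i _ => by ring
  have h2 : (1 : Fin 1 → ℝ) ⬝ᵥ ((Matrix.of fun (_ : Fin 1) j => h j / 2) *ᵥ x) = h ⬝ᵥ x / 2 := by
    simp [mulVec, dotProduct, Finset.sum_div]
    exact Finset.sum_congr rfl fun i _ => by ring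
  have h3 : (1 : Fin 1 → ℝ) ⬝ᵥ ((Matrix.of fun (_ : Fin 1) (_ : Fin 1) => c - ∑ i, D i i) *ᵥ (1 : Fin 1 → ℝ)) = c - ∑ i, D i i := by
    simp [mulVec, dotProduct]
  rw [hquad, h1, h2, h3] at hv
  have hsum : ∑ i, D i i * y i ^ 2 ≤ ∑ i, D i i := by
    apply Finset.sum_le_sum
    intro i _
    have h4 := hx i
    have hy2 : y i ^ 2 ≤ 1 := by nlinarith [h4.1, h4.2]
    calc D i i * y i ^ 2 ≤ D i i * 1 := mul_le_mul_of_nonneg_left hy2 (hDnn i)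
      _ = D i i := mul_one _
  linarith
end

section
/- Let Xᵢ = {x : −1 ≤ Gᵢ x ≤ 1} be symmetric polytopes and suppose the global invariance condition holds: for all x ∈ X₁×⋯×X_d and d∈D, the i-th block of (A+BK)x + Ed belongs to Xᵢ, where K is block diagonal. Then for any x⁰ ∈ Xᵢ, the input u = Kᵢ x⁰ satisfies the worst-case constraint: for every row r, (Gᵢ(A_{ii}x⁰ + Bᵢu))ᵣ + Σ_{j≠i} sup_{xⱼ∈Xⱼ}(Gᵢ A_{ij} xⱼ)ᵣ + sup_{d∈D}(Gᵢ Eᵢ d)ᵣ ≤ 1, i.e., the set of invariance-enforcing inputs at x⁰ is nonempty. -/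
/-!
Apply the global invariance condition to the state that equals `x⁰` in block `i` and an
arbitrary point of `Xⱼ` in every other block, and to an arbitrary disturbance. Row `r` of the
resulting constraint `Gᵢ xᵢ⁺ ≤ 1` splits into a term in `x⁰` plus one term per block `j ≠ i` and
one in `dᵢ`, each depending on its own variable only, so the bound survives taking suprema one
block at a time (over nonempty sets: `0 ∈ Xⱼ`).
-/

open Matrix

section SupremumBounds

variable {β : Type*} [ConditionallyCompleteLattice β] [AddCommGroup β] [IsOrderedAddMonoid β]

theorem sSup_image_add_le {α : Type*} {S : Set α} (hS : S.Nonempty) (f : α → β) {c b : β}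
    (h : ∀ x ∈ S, f x + c ≤ b) : sSup (f '' S) + c ≤ b :=
  le_sub_iff_add_le.mp <| csSup_le (hS.image f) <|
    Set.forall_mem_image.2 fun x hx => le_sub_iff_add_le.mpr (h x hx)

theorem Finset.sum_sSup_image_le {ι : Type*} {α : ι → Type*} {S : ∀ j, Set (α j)}
    (hS : ∀ j, (S j).Nonempty) (f : ∀ j, α j → β) (s : Finset ι) {b : β}
    (h : ∀ x : ∀ j, α j, (∀ j, x j ∈ S j) → ∑ j ∈ s, f j (x j) ≤ b) :
    ∑ j ∈ s, sSup (f j '' S j) ≤ b := by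
  classical
  induction s using Finset.induction generalizing b with
  | empty => simpa using h (fun j => (hS j).some) fun j => (hS j).some_mem
  | insert a s ha ih =>
    rw [Finset.sum_insert ha, add_comm, ← le_sub_iff_add_le]
    refine ih fun x hx => le_sub_iff_add_le.mpr ?_
    rw [add_comm]
    refine sSup_image_add_le (hS a) (f a) fun y hy => ?_
    have hsum := h (Function.update x a y)
      ((Function.forall_update_iff x fun j v => v ∈ S j).2 ⟨hy, fun j _ => hx j⟩)
    rwa [Finset.sum_insert ha, Function.update_self,
      Finset.sum_congr rfl fun j hj => by rw [Function.update_of_ne (ne_of_mem_of_not_mem hj ha)]]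
      at hsum

end SupremumBounds

theorem stmt10_general {d : ℕ} (n m p N : Fin d → ℕ)
    (A : ∀ i j, Matrix (Fin (n i)) (Fin (n j)) ℝ)
    (B : ∀ i, Matrix (Fin (n i)) (Fin (m i)) ℝ)
    (K : ∀ i, Matrix (Fin (m i)) (Fin (n i)) ℝ)
    (E : ∀ i, Matrix (Fin (n i)) (Fin (p i)) ℝ)
    (G : ∀ i, Matrix (Fin (N i)) (Fin (n i)) ℝ)
    (X : ∀ i, Set (Fin (n i) → ℝ))
    (hX : ∀ i, X i = {x | ∀ k, -1 ≤ (G i).mulVec x k ∧ (G i).mulVec x k ≤ 1})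
    (D : ∀ i, Set (Fin (p i) → ℝ))
    (hDne : ∀ i, (D i).Nonempty)
    (hinv : ∀ xs : ∀ j, Fin (n j) → ℝ, (∀ j, xs j ∈ X j) →
      ∀ ds : ∀ j, Fin (p j) → ℝ, (∀ j, ds j ∈ D j) →
      ∀ i, (∑ j, (A i j).mulVec (xs j) + (B i).mulVec ((K i).mulVec (xs i))
              + (E i).mulVec (ds i)) ∈ X i)
    (i : Fin d) (x0 : Fin (n i) → ℝ) (hx0 : x0 ∈ X i) :
    ∀ r : Fin (N i),
      (G i).mulVec ((A i i).mulVec x0 + (B i).mulVec ((K i).mulVec x0)) r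
        + ∑ j ∈ Finset.univ.erase i,
            sSup ((fun xj => ((G i) * (A i j)).mulVec xj r) '' X j)
        + sSup ((fun dd => ((G i) * (E i)).mulVec dd r) '' D i) ≤ 1 := by
  intro r
  classical
  have hXne : ∀ j, (X j).Nonempty := fun j => ⟨0, by simp [hX j]⟩
  set a := (G i).mulVec ((A i i).mulVec x0 + (B i).mulVec ((K i).mulVec x0)) r
  have row_le : ∀ xs : ∀ j, Fin (n j) → ℝ, (∀ j, xs j ∈ X j) → ∀ dd ∈ D i,
      ((G i * E i).mulVec dd) r
        + (a + ∑ j ∈ Finset.univ.erase i, ((G i * A i j).mulVec (xs j)) r) ≤ 1 := by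
    intro xs hxs dd hdd
    have hmem := hinv (Function.update xs i x0)
      ((Function.forall_update_iff xs fun j v => v ∈ X j).2 ⟨hx0, fun j _ => hxs j⟩)
      (Function.update (fun j => (hDne j).some) i dd)
      ((Function.forall_update_iff _ fun j v => v ∈ D j).2 ⟨hdd, fun j _ => (hDne j).some_mem⟩) i
    rw [hX i] at hmem
    have hrow := (hmem r).2
    rw [← Finset.add_sum_erase _ _ (Finset.mem_univ i),
      Finset.sum_congr rfl fun j hj => by rw [Function.update_of_ne (Finset.ne_of_mem_erase hj)]]
      at hrow
    simp only [Function.update_self, mulVec_add, mulVec_sum, mulVec_mulVec, Pi.add_apply,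
      Finset.sum_apply] at hrow
    simp only [a, mulVec_add, mulVec_mulVec, Pi.add_apply]
    linarith
  have hsup := Finset.sum_sSup_image_le hXne (fun j xj => ((G i * A i j).mulVec xj) r)
    (Finset.univ.erase i) (b := 1 - a - sSup ((fun dd => ((G i * E i).mulVec dd) r) '' D i))
    fun xs hxs => by linarith [sSup_image_add_le (hDne i) _ (row_le xs hxs)]
  linarith

/-- under block-diagonal feedback `K`, global one-step invariance implies
that for any `x⁰ ∈ Xᵢ` the input `u = Kᵢ x⁰` satisfies the worst-case row constraints,
so the flexible input set is nonempty. -/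
theorem stmt10 {d : ℕ} (n m p N : Fin d → ℕ)
    (A : ∀ i j, Matrix (Fin (n i)) (Fin (n j)) ℝ)
    (B : ∀ i, Matrix (Fin (n i)) (Fin (m i)) ℝ)
    (K : ∀ i, Matrix (Fin (m i)) (Fin (n i)) ℝ)
    (E : ∀ i, Matrix (Fin (n i)) (Fin (p i)) ℝ)
    (G : ∀ i, Matrix (Fin (N i)) (Fin (n i)) ℝ)
    (X : ∀ i, Set (Fin (n i) → ℝ))
    (hX : ∀ i, X i = {x | ∀ k, -1 ≤ (G i).mulVec x k ∧ (G i).mulVec x k ≤ 1})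
    (hXc : ∀ i, IsCompact (X i)) (hXne : ∀ i, (X i).Nonempty)
    (D : ∀ i, Set (Fin (p i) → ℝ))
    (hDc : ∀ i, IsCompact (D i)) (hDne : ∀ i, (D i).Nonempty)
    (hinv : ∀ xs : ∀ j, Fin (n j) → ℝ, (∀ j, xs j ∈ X j) →
      ∀ ds : ∀ j, Fin (p j) → ℝ, (∀ j, ds j ∈ D j) →
      ∀ i, (∑ j, (A i j).mulVec (xs j) + (B i).mulVec ((K i).mulVec (xs i))
              + (E i).mulVec (ds i)) ∈ X i)
    (i : Fin d) (x0 : Fin (n i) → ℝ) (hx0 : x0 ∈ X i) :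
    ∀ r : Fin (N i),
      (G i).mulVec ((A i i).mulVec x0 + (B i).mulVec ((K i).mulVec x0)) r
        + ∑ j ∈ Finset.univ.erase i,
            sSup ((fun xj => ((G i) * (A i j)).mulVec xj r) '' X j)
        + sSup ((fun dd => ((G i) * (E i)).mulVec dd r) '' D i) ≤ 1 :=
  stmt10_general n m p N A B K E G X hX D hDne hinv i x0 hx0
end

section
/- Let M = [[P, Q],[Qᵀ, R]] be symmetric with P ≻ 0 and R ≻ 0. If [[P, QΛ],[ΛQᵀ, 2Λ − R]] ≻ 0 for some symmetric positive definite Λ, then [[P, Q],[Qᵀ, R⁻¹]] ≻ 0. -/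
open Matrix

lemma aux_congr {k : Type*} [Fintype k] [DecidableEq k]
    {A B : Matrix k k ℝ} (hA : A.PosDef) (hB : IsUnit B) :
    (Bᴴ * A * B).PosDef := by
  rw [posDef_iff_dotProduct_mulVec] at hA ⊢
  refine ⟨isHermitian_conjTranspose_mul_mul B hA.1, fun x hx => ?_⟩
  have hinj : Function.Injective B.mulVec := mulVec_injective_iff_isUnit.mpr hB
  have hBx : B *ᵥ x ≠ 0 := by
    intro h
    exact hx (hinj (by simpa using h))
  simpa only [star_mulVec, dotProduct_mulVec, vecMul_vecMul] using hA.2 (x := B *ᵥ x) hBx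

lemma aux_blkdiag {n m : ℕ} {S : Matrix (Fin m) (Fin m) ℝ} (hS : S.PosSemidef) :
    (fromBlocks (0 : Matrix (Fin n) (Fin n) ℝ) 0 0 S).PosSemidef := by
  rw [posSemidef_iff_dotProduct_mulVec] at hS ⊢
  constructor
  · have h1 : Sᵀ = S := by simpa [Matrix.IsSymm] using hS.1
    unfold Matrix.IsHermitian
    rw [fromBlocks_conjTranspose]
    simp [hS.1.eq, h1]
  · intro x
    have := hS.2 (x ∘ Sum.inr)
    simpa [fromBlocks_mulVec, dotProduct, Fintype.sum_sum_type, mulVec] using this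

theorem stmt18 {n m : ℕ} (P : Matrix (Fin n) (Fin n) ℝ) (Q : Matrix (Fin n) (Fin m) ℝ)
    (R Λ : Matrix (Fin m) (Fin m) ℝ) (hP : P.IsSymm)
    (hR : R.PosDef) (hΛ : Λ.PosDef)
    (hcond : (fromBlocks P (Q * Λ) (Λ * Qᵀ) ((2 : ℝ) • Λ - R)).PosDef) :
    (fromBlocks P Q Qᵀ R⁻¹).PosDef := by
  have hRdet : IsUnit R.det := (isUnit_iff_isUnit_det R).mp hR.isUnit
  have hΛdet : IsUnit Λ.det := (isUnit_iff_isUnit_det Λ).mp hΛ.isUnit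
  have hRR : R * R⁻¹ = 1 := mul_nonsing_inv R hRdet
  have hRR' : R⁻¹ * R = 1 := nonsing_inv_mul R hRdet
  have hΛΛ : Λ * Λ⁻¹ = 1 := mul_nonsing_inv Λ hΛdet
  have hΛΛ' : Λ⁻¹ * Λ = 1 := nonsing_inv_mul Λ hΛdet
  have hΛH : Λᴴ = Λ := hΛ.isHermitian.eq
  have hRH : Rᴴ = R := hR.isHermitian.eq
  -- S := Λ R⁻¹ Λ - (2Λ - R) is positive semidefinite
  set S : Matrix (Fin m) (Fin m) ℝ := Λ * R⁻¹ * Λ - ((2 : ℝ) • Λ - R) with hSdef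
  have hSeq : S = (Λ - R) * R⁻¹ * (Λ - R)ᴴ := by
    rw [conjTranspose_sub, hΛH, hRH]
    have expand : (Λ - R) * R⁻¹ * (Λ - R)
        = Λ * R⁻¹ * Λ - Λ * (R⁻¹ * R) - (R * R⁻¹) * Λ + (R * R⁻¹) * R := by
      noncomm_ring
    rw [hSdef, expand, hRR, hRR', Matrix.mul_one, Matrix.one_mul, Matrix.one_mul, two_smul]
    abel
  have hS : S.PosSemidef := hSeq ▸ hR.inv.posSemidef.mul_mul_conjTranspose_same (Λ - R)
  -- M1 := [[P, QΛ],[ΛQᵀ, Λ R⁻¹ Λ]] is positive definite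
  have hM1 : (fromBlocks P (Q * Λ) (Λ * Qᵀ) (Λ * R⁻¹ * Λ)).PosDef := by
    have : fromBlocks P (Q * Λ) (Λ * Qᵀ) (Λ * R⁻¹ * Λ)
        = fromBlocks P (Q * Λ) (Λ * Qᵀ) ((2 : ℝ) • Λ - R)
          + fromBlocks 0 0 0 S := by
      rw [fromBlocks_add]
      simp [hSdef]
    rw [this]
    exact hcond.add_posSemidef (aux_blkdiag hS)
  -- congruence with E = blkdiag(1, Λ⁻¹)
  set E : Matrix (Fin n ⊕ Fin m) (Fin n ⊕ Fin m) ℝ := fromBlocks 1 0 0 Λ⁻¹ with hEdef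
  have hEunit : IsUnit E := by
    have h1 : E * fromBlocks 1 0 0 Λ = 1 := by
      rw [hEdef, fromBlocks_multiply]
      simp [hΛΛ', fromBlocks_one]
    have h2 : fromBlocks 1 0 0 Λ * E = 1 := by
      rw [hEdef, fromBlocks_multiply]
      simp [hΛΛ, fromBlocks_one]
    exact ⟨⟨E, fromBlocks 1 0 0 Λ, h1, h2⟩, rfl⟩
  have hΛinvH : (Λ⁻¹)ᴴ = Λ⁻¹ := by
    rw [conjTranspose_nonsing_inv, hΛH]
  have hEconj : Eᴴ * fromBlocks P (Q * Λ) (Λ * Qᵀ) (Λ * R⁻¹ * Λ) * E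
      = fromBlocks P Q Qᵀ R⁻¹ := by
    rw [hEdef, fromBlocks_conjTranspose, fromBlocks_multiply, fromBlocks_multiply]
    simp only [conjTranspose_one, conjTranspose_zero, hΛinvH, Matrix.one_mul,
      Matrix.mul_one, Matrix.zero_mul, Matrix.mul_zero, add_zero, zero_add]
    have h12 : Q * Λ * Λ⁻¹ = Q := by rw [Matrix.mul_assoc, hΛΛ, Matrix.mul_one]
    have h21 : Λ⁻¹ * (Λ * Qᵀ) = Qᵀ := by rw [← Matrix.mul_assoc, hΛΛ', Matrix.one_mul]
    have h22 : Λ⁻¹ * (Λ * R⁻¹ * Λ) * Λ⁻¹ = R⁻¹ := by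
      rw [show Λ⁻¹ * (Λ * R⁻¹ * Λ) * Λ⁻¹ = (Λ⁻¹ * Λ) * (R⁻¹ * (Λ * Λ⁻¹)) from by
        noncomm_ring, hΛΛ', hΛΛ, Matrix.mul_one, Matrix.one_mul]
    rw [h12, h21, h22]
  rw [← hEconj]
  exact aux_congr hM1 hEunit
end
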